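/- Let ρ₁, ρ₂: G_{−2,7} → SU(2) be irreducible representations with ρ₁(μ) = ρ₂(μ) = diag(e^{ir}, e^{−ir}) for some r ∈ (0, π). Then the subspace of χ(π₁(Z)) consisting of classes [ρ] whose restriction to the first copy of G_{−2,7} is conjugate to ρ₁ and whose restriction to the second copy is conjugate to ρ₂ is homeomorphic to a circle. -/

import Mathlib

open Matrix

noncomputable section

/-- `SU(2)`: 2×2 special unitary complex matrices. -/
abbrev SU2 : Type := Matrix.specialUnitaryGroup (Fin 2) ℂ

namespace CS

noncomputable instance : Group SU2 :=
  { (inferInstance : Monoid SU2) with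
    inv := fun A => ⟨star (A : Matrix (Fin 2) (Fin 2) ℂ), by
      rcases Submonoid.mem_inf.mp A.2 with ⟨h1, h2⟩
      refine Submonoid.mem_inf.mpr ⟨Unitary.star_mem h1, ?_⟩
      have hdet : (star (A : Matrix (Fin 2) (Fin 2) ℂ)).det = star ((A : Matrix (Fin 2) (Fin 2) ℂ).det) := by
        simp [Matrix.star_eq_conjTranspose, Matrix.det_conjTranspose]
      have h2' : (A : Matrix (Fin 2) (Fin 2) ℂ).det = 1 := h2
      have : (star (A : Matrix (Fin 2) (Fin 2) ℂ)).det = 1 := by rw [hdet, h2', star_one]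
      simpa only [MonoidHom.mem_mker, ← Matrix.coe_detMonoidHom] using this⟩
    inv_mul_cancel := fun A => Subtype.ext (Submonoid.mem_inf.mp A.2).1.1 }

/-- The topology of pointwise convergence on the space of representations. -/
instance repTop (G : Type*) [Group G] : TopologicalSpace (G →* SU2) :=
  TopologicalSpace.induced (fun ρ => (ρ : G → SU2)) inferInstance

/-- Conjugation equivalence of representations. -/
def conjSetoid (G : Type*) [Group G] : Setoid (G →* SU2) where
  r ρ σ := ∃ u : SU2, ∀ g, σ g = u * ρ g * u⁻¹
  iseqv := by
    refine ⟨fun ρ => ⟨1, by simp⟩, ?_, ?_⟩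
    · rintro ρ σ ⟨u, h⟩
      exact ⟨u⁻¹, fun g => by rw [h g]; group⟩
    · rintro ρ σ τ ⟨u, h⟩ ⟨v, h'⟩
      exact ⟨v * u, fun g => by rw [h' g, h g]; group⟩

/-- The `SU(2)` character variety of a group `G`. -/
abbrev CharVar (G : Type*) [Group G] : Type _ := Quotient (conjSetoid G)

/-- The conjugacy class of a representation. -/
abbrev charCl {G : Type*} [Group G] (ρ : G →* SU2) : CharVar G :=
  Quotient.mk (conjSetoid G) ρ

/-- A representation is abelian if its image is abelian. -/
def IsAbelianRep {G : Type*} [Group G] (ρ : G →* SU2) : Prop :=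
  ∀ g h : G, Commute (ρ g) (ρ h)

/-- A representation is irreducible if its image is a non-abelian subgroup of `SU(2)`. -/
def IsIrrep {G : Type*} [Group G] (ρ : G →* SU2) : Prop :=
  ¬ IsAbelianRep ρ

/-- The irreducible part `χ*(G)` of the character variety. -/
abbrev CharVarIrr (G : Type*) [Group G] : Type _ :=
  {c : CharVar G // ∃ ρ : G →* SU2, IsIrrep ρ ∧ c = charCl ρ}

end CS
namespace CS

/-- `su(2)`: trace-zero skew-adjoint 2×2 complex matrices, as a real vector space. -/
def su2 : Submodule ℝ (Matrix (Fin 2) (Fin 2) ℂ) where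
  carrier := {A | Aᴴ = -A ∧ A.trace = 0}
  add_mem' := by
    rintro A B ⟨hA1, hA2⟩ ⟨hB1, hB2⟩
    refine ⟨?_, ?_⟩
    · rw [Matrix.conjTranspose_add, hA1, hB1, neg_add]
    · rw [Matrix.trace_add, hA2, hB2, add_zero]
  zero_mem' := by
    constructor <;> simp
  smul_mem' := by
    rintro c A ⟨hA1, hA2⟩
    refine ⟨?_, ?_⟩
    · rw [Matrix.conjTranspose_smul, hA1, smul_neg, star_trivial]
    · rw [Matrix.trace_smul, hA2, smul_zero]

variable {G : Type*} [Group G]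

/-- The adjoint action of a representation on 2×2 matrices: `g · v = ρ(g) v ρ(g)⁻¹`. -/
def adAct (ρ : G →* SU2) (g : G) (A : Matrix (Fin 2) (Fin 2) ℂ) : Matrix (Fin 2) (Fin 2) ℂ :=
  (ρ g : Matrix (Fin 2) (Fin 2) ℂ) * A * ((ρ g⁻¹ : SU2) : Matrix (Fin 2) (Fin 2) ℂ)

lemma adAct_add (ρ : G →* SU2) (g : G) (A B : Matrix (Fin 2) (Fin 2) ℂ) :
    adAct ρ g (A + B) = adAct ρ g A + adAct ρ g B := by
  simp [adAct, Matrix.add_mul, Matrix.mul_add]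

lemma adAct_smul (ρ : G →* SU2) (g : G) (c : ℝ) (A : Matrix (Fin 2) (Fin 2) ℂ) :
    adAct ρ g (c • A) = c • adAct ρ g A := by
  simp [adAct, Matrix.smul_mul, Matrix.mul_smul]

/-- The space of 1-cocycles of `G` with coefficients in `su(2)` twisted by `ad ρ`. -/
def oneCocyclesAd (ρ : G →* SU2) : Submodule ℝ (G → Matrix (Fin 2) (Fin 2) ℂ) where
  carrier := {f | (∀ g, f g ∈ su2) ∧ ∀ g h, f (g * h) = f g + adAct ρ g (f h)}
  add_mem' := by
    rintro f f' ⟨hf1, hf2⟩ ⟨hf'1, hf'2⟩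
    refine ⟨fun g => su2.add_mem (hf1 g) (hf'1 g), fun g h => ?_⟩
    simp only [Pi.add_apply, hf2 g h, hf'2 g h, adAct_add]
    abel
  zero_mem' := by
    refine ⟨fun g => su2.zero_mem, fun g h => ?_⟩
    simp [adAct]
  smul_mem' := by
    rintro c f ⟨hf1, hf2⟩
    refine ⟨fun g => su2.smul_mem c (hf1 g), fun g h => ?_⟩
    simp only [Pi.smul_apply, hf2 g h, adAct_smul, smul_add]

/-- The space of 1-coboundaries of `G` with coefficients in `su(2)` twisted by `ad ρ`. -/
def oneCoboundariesAd (ρ : G →* SU2) : Submodule ℝ (G → Matrix (Fin 2) (Fin 2) ℂ) where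
  carrier := {f | ∃ A ∈ su2, ∀ g, f g = adAct ρ g A - A}
  add_mem' := by
    rintro f f' ⟨A, hA, hf⟩ ⟨B, hB, hf'⟩
    refine ⟨A + B, su2.add_mem hA hB, fun g => ?_⟩
    simp only [Pi.add_apply, hf g, hf' g, adAct_add]
    abel
  zero_mem' := ⟨0, su2.zero_mem, fun g => by simp [adAct]⟩
  smul_mem' := by
    rintro c f ⟨A, hA, hf⟩
    refine ⟨c • A, su2.smul_mem c hA, fun g => ?_⟩
    simp only [Pi.smul_apply, hf g, adAct_smul, smul_sub]

/-- First group cohomology `H¹(G; su(2)_{ad ρ})`, as a real vector space. -/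
def H1Ad (ρ : G →* SU2) : Type _ :=
  ↥(oneCocyclesAd ρ) ⧸ ((oneCoboundariesAd ρ).comap (oneCocyclesAd ρ).subtype)

noncomputable instance (ρ : G →* SU2) : AddCommGroup (H1Ad ρ) :=
  inferInstanceAs (AddCommGroup (↥(oneCocyclesAd ρ) ⧸ ((oneCoboundariesAd ρ).comap (oneCocyclesAd ρ).subtype)))

noncomputable instance (ρ : G →* SU2) : Module ℝ (H1Ad ρ) :=
  inferInstanceAs (Module ℝ (↥(oneCocyclesAd ρ) ⧸ ((oneCoboundariesAd ρ).comap (oneCocyclesAd ρ).subtype)))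

/-- The dimension (rank) of `H¹(G; su(2)_{ad ρ})` over `ℝ`. -/
noncomputable def h1dim (ρ : G →* SU2) : Cardinal := Module.rank ℝ (H1Ad ρ)

end CS
namespace CS

/-- The relator set of the torus knot group `⟨x, y | xᵖ = y^q⟩`. -/
def tkRel (p q : ℤ) : Set (FreeGroup (Fin 2)) :=
  {FreeGroup.of 0 ^ p * FreeGroup.of 1 ^ (-q)}

/-- The `(p,q)` torus knot group `G_{p,q} = ⟨x, y | xᵖ y^{-q}⟩`. -/
abbrev TK (p q : ℤ) : Type := PresentedGroup (tkRel p q)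

/-- The generator `x` of `G_{p,q}`. -/
def tkx (p q : ℤ) : TK p q := PresentedGroup.of 0

/-- The generator `y` of `G_{p,q}`. -/
def tky (p q : ℤ) : TK p q := PresentedGroup.of 1

/-- The meridian `μ = xᵃ yᵇ` of `G_{p,q}`. -/
def tkMu (p q a b : ℤ) : TK p q := tkx p q ^ a * tky p q ^ b

/-- The longitude `λ = xᵖ μ^{-pq}` of `G_{p,q}`. -/
def tkLam (p q a b : ℤ) : TK p q := tkx p q ^ p * tkMu p q a b ^ (-(p * q))

lemma tk_rel_holds (p q : ℤ) : tkx p q ^ p = tky p q ^ q := by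
  have hmem : FreeGroup.of (0 : Fin 2) ^ p * FreeGroup.of (1 : Fin 2) ^ (-q) ∈
      Subgroup.normalClosure (tkRel p q) :=
    Subgroup.subset_normalClosure rfl
  have h1 : PresentedGroup.mk (tkRel p q) (FreeGroup.of 0 ^ p * FreeGroup.of 1 ^ (-q)) = 1 :=
    (QuotientGroup.eq_one_iff _).mpr hmem
  have h2 : tkx p q ^ p * tky p q ^ (-q) = 1 := by
    have := h1
    rw [_root_.map_mul, map_zpow, map_zpow] at this
    exact this
  rw [_root_.zpow_neg] at h2
  exact (mul_inv_eq_one.mp h2)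

lemma tk_xp_central (p q : ℤ) (w : TK p q) : Commute (tkx p q ^ p) w := by
  have hw : w ∈ Subgroup.closure (Set.range (PresentedGroup.of : Fin 2 → TK p q)) := by
    rw [PresentedGroup.closure_range_of]; trivial
  induction hw using Subgroup.closure_induction with
  | mem z hz =>
      obtain ⟨i, rfl⟩ := hz
      fin_cases i
      · exact (Commute.refl (tkx p q)).zpow_left p
      · rw [tk_rel_holds p q]
        exact (Commute.refl (tky p q)).zpow_left q
  | one => exact Commute.one_right _
  | mul a b _ _ ha hb => exact ha.mul_right hb
  | inv a _ ha => exact ha.inv_right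

lemma tk_mu_lam_comm (p q a b : ℤ) : Commute (tkMu p q a b) (tkLam p q a b) := by
  unfold tkLam
  exact (tk_xp_central p q (tkMu p q a b)).symm.mul_right
    ((Commute.refl (tkMu p q a b)).zpow_right (-(p * q)))

end CS
namespace CS

/-- The free abelian group of rank 2, written multiplicatively. -/
abbrev Z2 : Type := Multiplicative (ℤ × ℤ)

/-- The homomorphism `ℤ² → G` sending the generators to a pair of commuting elements. -/
def zsqHom {G : Type*} [Group G] (u v : G) (huv : Commute u v) : Z2 →* G where
  toFun z := u ^ (Multiplicative.toAdd z).1 * v ^ (Multiplicative.toAdd z).2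
  map_one' := by simp
  map_mul' z w := by
    have h := (huv.zpow_zpow (Multiplicative.toAdd w).1 (Multiplicative.toAdd z).2).eq
    simp only [toAdd_mul, Prod.fst_add, Prod.snd_add, _root_.zpow_add]
    calc u ^ (Multiplicative.toAdd z).1 * u ^ (Multiplicative.toAdd w).1 *
          (v ^ (Multiplicative.toAdd z).2 * v ^ (Multiplicative.toAdd w).2)
        = u ^ (Multiplicative.toAdd z).1 *
            (u ^ (Multiplicative.toAdd w).1 * v ^ (Multiplicative.toAdd z).2) *
            v ^ (Multiplicative.toAdd w).2 := by group
      _ = u ^ (Multiplicative.toAdd z).1 *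
            (v ^ (Multiplicative.toAdd z).2 * u ^ (Multiplicative.toAdd w).1) *
            v ^ (Multiplicative.toAdd w).2 := by rw [h]
      _ = u ^ (Multiplicative.toAdd z).1 * v ^ (Multiplicative.toAdd z).2 *
            (u ^ (Multiplicative.toAdd w).1 * v ^ (Multiplicative.toAdd w).2) := by group

section Amalg

variable {A G H : Type*} [Group A] [Group G] [Group H]

/-- The normal subgroup of the free product generated by the amalgamation relations. -/
def amalgRel (φ : A →* G) (ψ : A →* H) : Subgroup (Monoid.Coprod G H) :=
  Subgroup.normalClosure (Set.range fun a => Monoid.Coprod.inl (φ a) * (Monoid.Coprod.inr (ψ a))⁻¹)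

instance amalgRel_normal (φ : A →* G) (ψ : A →* H) : (amalgRel φ ψ).Normal :=
  Subgroup.normalClosure_normal

/-- The pushout (amalgamated free product) of `φ : A → G` and `ψ : A → H`. -/
abbrev Amalg (φ : A →* G) (ψ : A →* H) : Type _ :=
  Monoid.Coprod G H ⧸ amalgRel φ ψ

/-- The canonical map `G → G *_A H`. -/
def Amalg.inl (φ : A →* G) (ψ : A →* H) : G →* Amalg φ ψ :=
  (QuotientGroup.mk' (amalgRel φ ψ)).comp Monoid.Coprod.inl

/-- The canonical map `H → G *_A H`. -/
def Amalg.inr (φ : A →* G) (ψ : A →* H) : H →* Amalg φ ψ :=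
  (QuotientGroup.mk' (amalgRel φ ψ)).comp Monoid.Coprod.inr

lemma amalg_comm (φ : A →* G) (ψ : A →* H) (a : A) :
    Amalg.inl φ ψ (φ a) = Amalg.inr φ ψ (ψ a) := by
  have hgen : Monoid.Coprod.inl (φ a) * (Monoid.Coprod.inr (ψ a))⁻¹ ∈ amalgRel φ ψ :=
    Subgroup.subset_normalClosure ⟨a, rfl⟩
  have hinv : (Monoid.Coprod.inr (ψ a) : Monoid.Coprod G H) * (Monoid.Coprod.inl (φ a))⁻¹ ∈
      amalgRel φ ψ := by
    have := (amalgRel φ ψ).inv_mem hgen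
    simpa [_root_.mul_inv_rev] using this
  have hkey : ((Monoid.Coprod.inl (φ a) : Monoid.Coprod G H))⁻¹ * Monoid.Coprod.inr (ψ a) ∈
      amalgRel φ ψ := (amalgRel_normal φ ψ).mem_comm hinv
  exact (QuotientGroup.eq (s := amalgRel φ ψ)).mpr hkey

end Amalg

/-! Specific meridians and longitudes. -/

/-- Meridian of `T(3,5)`. -/
def mu35 : TK 3 5 := tkMu 3 5 2 (-3)
/-- Longitude of `T(3,5)`. -/
def lam35 : TK 3 5 := tkLam 3 5 2 (-3)
/-- Meridian of `T(2,7)`. -/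
def mu27 : TK 2 7 := tkMu 2 7 1 (-3)
/-- Longitude of `T(2,7)`. -/
def lam27 : TK 2 7 := tkLam 2 7 1 (-3)
/-- Meridian of `T(-2,7)`. -/
def muN27 : TK (-2) 7 := tkMu (-2) 7 1 3
/-- Longitude of `T(-2,7)`. -/
def lamN27 : TK (-2) 7 := tkLam (-2) 7 1 3

/-- `φ_X : ℤ² → G_{3,5}`, `(m,n) ↦ μ_X^m λ_X^n`. -/
def phiX : Z2 →* TK 3 5 := zsqHom mu35 lam35 (tk_mu_lam_comm 3 5 2 (-3))

lemma mu_mulLam_comm {Γ : Type*} [Group Γ] {μ ℓ : Γ} (h : Commute μ ℓ) :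
    Commute μ ((μ * ℓ)⁻¹) :=
  ((Commute.refl μ).mul_right h).inv_right

/-- `φ_Y : ℤ² → G_{2,7}`, `(m,n) ↦ μ_Y^m (μ_Y λ_Y)^{-n}`. -/
def phiY : Z2 →* TK 2 7 :=
  zsqHom mu27 ((mu27 * lam27)⁻¹) (mu_mulLam_comm (tk_mu_lam_comm 2 7 1 (-3)))

/-- `π₁(Σ₁)`, the pushout of `φ_X` and `φ_Y`. -/
abbrev Pi1Sigma1 : Type _ := Amalg phiX phiY

/-- `π₁(Z)`, the group of the complement of `T(-2,7) # T(-2,7)`: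
the pushout of the two meridian inclusions `ℤ → G_{-2,7}`. -/
abbrev Pi1Z : Type _ :=
  Amalg (zpowersHom (TK (-2) 7) muN27) (zpowersHom (TK (-2) 7) muN27)

/-- The meridian of `Z`. -/
def muZ : Pi1Z := Amalg.inl _ _ muN27

/-- The longitude of `Z`: the product of the images of the two longitudes. -/
def lamZ : Pi1Z := Amalg.inl _ _ lamN27 * Amalg.inr _ _ lamN27

lemma muZ_eq_inr : muZ = Amalg.inr (zpowersHom (TK (-2) 7) muN27) (zpowersHom (TK (-2) 7) muN27) muN27 := by
  have := amalg_comm (zpowersHom (TK (-2) 7) muN27) (zpowersHom (TK (-2) 7) muN27)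
    (Multiplicative.ofAdd 1)
  simpa [muZ] using this

lemma muZ_lamZ_comm : Commute muZ lamZ := by
  have h1 : Commute muZ (Amalg.inl (zpowersHom (TK (-2) 7) muN27) (zpowersHom (TK (-2) 7) muN27) lamN27) :=
    (tk_mu_lam_comm (-2) 7 1 3).map _
  have h2 : Commute muZ (Amalg.inr (zpowersHom (TK (-2) 7) muN27) (zpowersHom (TK (-2) 7) muN27) lamN27) := by
    rw [muZ_eq_inr]
    exact (tk_mu_lam_comm (-2) 7 1 3).map _
  exact h1.mul_right h2

/-- `ψ_X : ℤ² → G_{3,5}` (same formula as `φ_X`). -/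
def psiX : Z2 →* TK 3 5 := phiX

/-- `ψ_Z : ℤ² → π₁(Z)`, `(m,n) ↦ μ_Z^m (μ_Z λ_Z)^{-n}`. -/
def psiZ : Z2 →* Pi1Z := zsqHom muZ ((muZ * lamZ)⁻¹) (mu_mulLam_comm muZ_lamZ_comm)

/-- `π₁(Σ₂)`, the pushout of `ψ_X` and `ψ_Z`. -/
abbrev Pi1Sigma2 : Type _ := Amalg psiX psiZ

end CS
namespace CS

/-- The diagonal matrix `diag(e^{it}, e^{-it})`. -/
def diagU (t : ℝ) : Matrix (Fin 2) (Fin 2) ℂ :=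
  Matrix.diagonal ![Complex.exp ((t : ℂ) * Complex.I), Complex.exp (-(t : ℂ) * Complex.I)]

lemma star_exp_I (s : ℝ) :
    star (Complex.exp ((s : ℂ) * Complex.I)) = Complex.exp (-(s : ℂ) * Complex.I) :=
  calc star (Complex.exp ((s : ℂ) * Complex.I))
      = (starRingEnd ℂ) (Complex.exp ((s : ℂ) * Complex.I)) := rfl
    _ = Complex.exp ((starRingEnd ℂ) ((s : ℂ) * Complex.I)) := (Complex.exp_conj _).symm
    _ = Complex.exp (-(s : ℂ) * Complex.I) := by
        rw [_root_.map_mul, Complex.conj_I, Complex.conj_ofReal, mul_neg, ← neg_mul]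

lemma exp_I_mul_exp_neg_I (s : ℝ) :
    Complex.exp ((s : ℂ) * Complex.I) * Complex.exp (-(s : ℂ) * Complex.I) = 1 := by
  rw [← Complex.exp_add, show (s : ℂ) * Complex.I + -(s : ℂ) * Complex.I = 0 by ring,
    Complex.exp_zero]

lemma diagU_mul (s u : ℝ) : diagU s * diagU u = diagU (s + u) := by
  unfold diagU
  rw [Matrix.diagonal_mul_diagonal, Matrix.diagonal_eq_diagonal_iff]
  intro i
  fin_cases i
  · show Complex.exp _ * Complex.exp _ = Complex.exp _
    rw [← Complex.exp_add]; congr 1; push_cast; ring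
  · show Complex.exp _ * Complex.exp _ = Complex.exp _
    rw [← Complex.exp_add]; congr 1; push_cast; ring

lemma diagU_zero : diagU 0 = 1 := by
  unfold diagU
  rw [show (![Complex.exp (((0:ℝ) : ℂ) * Complex.I), Complex.exp (-((0:ℝ) : ℂ) * Complex.I)] :
      Fin 2 → ℂ) = fun _ => 1 by funext i; fin_cases i <;> simp]
  exact Matrix.diagonal_one

lemma star_diagU (t : ℝ) : star (diagU t) = diagU (-t) := by
  unfold diagU
  rw [Matrix.star_eq_conjTranspose, Matrix.diagonal_conjTranspose,
    Matrix.diagonal_eq_diagonal_iff]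
  intro i
  fin_cases i
  · show star (Complex.exp ((t : ℂ) * Complex.I)) = Complex.exp (((-t : ℝ) : ℂ) * Complex.I)
    rw [star_exp_I t]; push_cast; ring_nf
  · show star (Complex.exp (-(t : ℂ) * Complex.I)) = Complex.exp (-((-t : ℝ) : ℂ) * Complex.I)
    rw [show -(t : ℂ) * Complex.I = ((-t : ℝ) : ℂ) * Complex.I by push_cast; ring,
      star_exp_I (-t)]

lemma diagU_mem (t : ℝ) : diagU t ∈ Matrix.specialUnitaryGroup (Fin 2) ℂ := by
  refine Submonoid.mem_inf.mpr ⟨⟨?_, ?_⟩, ?_⟩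
  · rw [star_diagU, diagU_mul, neg_add_cancel, diagU_zero]
  · rw [star_diagU, diagU_mul, add_neg_cancel, diagU_zero]
  · have : (diagU t).det = 1 := by
      unfold diagU
      rw [Matrix.det_diagonal, Fin.prod_univ_two]
      simpa using exp_I_mul_exp_neg_I t
    simpa only [MonoidHom.mem_mker, ← Matrix.coe_detMonoidHom] using this

/-- The element `diag(e^{it}, e^{-it})` of `SU(2)`. -/
def diagSU (t : ℝ) : SU2 := ⟨diagU t, diagU_mem t⟩

lemma diagSU_comm (s t : ℝ) : Commute (diagSU s) (diagSU t) := by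
  apply Subtype.ext
  show diagU s * diagU t = diagU t * diagU s
  rw [diagU_mul, diagU_mul, add_comm]

end CS
namespace CS

/-- The setoid on `A × [0,1)` collapsing `A × {0}` to a point. -/
def coneSetoid (A : Type*) : Setoid (A × (Set.Ico (0:ℝ) 1)) where
  r p q := p = q ∨ (((p.2 : ℝ) = 0) ∧ ((q.2 : ℝ) = 0))
  iseqv := by
    constructor
    · intro p; exact Or.inl rfl
    · rintro p q (rfl | ⟨h1, h2⟩)
      · exact Or.inl rfl
      · exact Or.inr ⟨h2, h1⟩
    · rintro p q r (rfl | ⟨h1, h2⟩) h'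
      · exact h'
      · rcases h' with rfl | ⟨h3, h4⟩
        · exact Or.inr ⟨h1, h2⟩
        · exact Or.inr ⟨h1, h4⟩

/-- The open cone on a space `A`: `(A × [0,1)) / (A × {0})`. -/
abbrev OpenCone (A : Type*) [TopologicalSpace A] : Type _ := Quotient (coneSetoid A)

/-- The setoid on `X ⊕ Y` identifying the two base points `x₀` and `y₀`. -/
def wedgeSetoid (X Y : Type*) (x0 : X) (y0 : Y) : Setoid (X ⊕ Y) where
  r p q := p = q ∨ ((p = Sum.inl x0 ∨ p = Sum.inr y0) ∧ (q = Sum.inl x0 ∨ q = Sum.inr y0))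
  iseqv := by
    constructor
    · intro p; exact Or.inl rfl
    · rintro p q (rfl | ⟨h1, h2⟩)
      · exact Or.inl rfl
      · exact Or.inr ⟨h2, h1⟩
    · rintro p q r (rfl | ⟨h1, h2⟩) h'
      · exact h'
      · rcases h' with rfl | ⟨h3, h4⟩
        · exact Or.inr ⟨h1, h2⟩
        · exact Or.inr ⟨h1, h4⟩

/-- The one-point union (wedge) of `X` and `Y` at the base points `x₀`, `y₀`. -/
abbrev Wedge (X Y : Type*) [TopologicalSpace X] [TopologicalSpace Y] (x0 : X) (y0 : Y) :
    Type _ := Quotient (wedgeSetoid X Y x0 y0)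

/-- The 2-sphere. -/
abbrev Sphere2 : Type _ := Metric.sphere (0 : EuclideanSpace ℝ (Fin 3)) 1

/-- The 3-torus. -/
abbrev Torus3 : Type _ := Circle × Circle × Circle

end CS

/-!
After conjugating a class of the gluing set so that it restricts to `ρ₁` on the first factor, the
conjugator `w` on the second factor must commute with `ρ₂(μ) = diag(e^{ir}, e^{-ir})`. As
`sin r ≠ 0`, `w` is diagonal, and conjugation by a diagonal element of `SU(2)` multiplies the
off-diagonal entries by `z` and `z̄` for some `z` on the circle; `sqrtDiag z` realizes this. Hence
`z ↦ [ρ₁ ∪ Ad (sqrtDiag z) ∘ ρ₂]` maps the circle continuously onto the gluing set.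
Irreducibility gives `a, b` with `c = ρ₁(a)₁₀ ρ₂(b)₀₁ ≠ 0`, and the traces at `a·b` and `a·μb`
are, up to constants, `2 Re(c z)` and `2 Re(e^{ir} c z)`, which determine `z`. So the map is
injective with Hausdorff image, and a continuous bijection from the compact circle onto a
Hausdorff space is a homeomorphism.
-/

namespace CS

open Complex ComplexConjugate

local notation "M2" => Matrix (Fin 2) (Fin 2) ℂ

lemma su2_star_mul_self (A : SU2) : star (A : M2) * (A : M2) = 1 :=
  (Submonoid.mem_inf.mp A.2).1.1

lemma su2_det (A : SU2) : (A : M2).det = 1 := (Submonoid.mem_inf.mp A.2).2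

lemma su2_star_eq_adjugate (A : SU2) : star (A : M2) = (A : M2).adjugate := by
  calc star (A : M2) = star (A : M2) * ((A : M2) * (A : M2).adjugate) := by
        rw [Matrix.mul_adjugate, su2_det, one_smul, mul_one]
    _ = (A : M2).adjugate := by rw [← mul_assoc, su2_star_mul_self, one_mul]

lemma su2_apply_one_one (A : SU2) : (A : M2) 1 1 = conj ((A : M2) 0 0) := by
  simpa [Matrix.adjugate_fin_two] using (congrFun (congrFun (su2_star_eq_adjugate A) 0) 0).symm

lemma su2_apply_one_zero (A : SU2) : (A : M2) 1 0 = -conj ((A : M2) 0 1) := by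
  simpa [Matrix.adjugate_fin_two, eq_neg_iff_add_eq_zero, add_comm] using
    congrFun (congrFun (su2_star_eq_adjugate A) 1) 0

lemma su2_apply_zero_zero_mul_conj_add (A : SU2) :
    (A : M2) 0 0 * conj ((A : M2) 0 0) + (A : M2) 0 1 * conj ((A : M2) 0 1) = 1 := by
  have h := su2_det A
  rw [Matrix.det_fin_two, su2_apply_one_one, su2_apply_one_zero] at h
  linear_combination h

lemma su2_apply_one_zero_eq_zero_iff (A : SU2) : (A : M2) 1 0 = 0 ↔ (A : M2) 0 1 = 0 := by
  rw [su2_apply_one_zero, neg_eq_zero, map_eq_zero]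

lemma su2_commute_of_apply_zero_one_eq_zero {A B : SU2}
    (hA : (A : M2) 0 1 = 0) (hB : (B : M2) 0 1 = 0) : Commute A B := by
  have hA' := (su2_apply_one_zero_eq_zero_iff A).2 hA
  have hB' := (su2_apply_one_zero_eq_zero_iff B).2 hB
  refine Subtype.ext ?_
  ext i j
  fin_cases i <;> fin_cases j <;> simp [Matrix.mul_apply, hA, hB, hA', hB', mul_comm]

lemma IsIrrep.exists_apply_zero_one_ne_zero {G : Type*} [Group G] {ρ : G →* SU2}
    (h : IsIrrep ρ) : ∃ a : G, ((ρ a : SU2) : M2) 0 1 ≠ 0 := by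
  by_contra! hc
  exact h fun g g' => su2_commute_of_apply_zero_one_eq_zero (hc g) (hc g')

lemma su2_coe_conj_of_apply_zero_one_eq_zero {v : SU2} (hv : (v : M2) 0 1 = 0) (A : SU2) :
    ((v * A * v⁻¹ : SU2) : M2) =
      !![(A : M2) 0 0, (v : M2) 0 0 ^ 2 * (A : M2) 0 1;
        conj ((v : M2) 0 0 ^ 2) * (A : M2) 1 0, (A : M2) 1 1] := by
  have hv10 := (su2_apply_one_zero_eq_zero_iff v).2 hv
  have hv11 := su2_apply_one_one v
  have hdet : (v : M2) 0 0 * conj ((v : M2) 0 0) = 1 := by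
    simpa [Matrix.det_fin_two, hv, hv11] using su2_det v
  change (v : M2) * A * star (v : M2) = _
  ext i j
  fin_cases i <;> fin_cases j <;> simp [Matrix.mul_apply, hv, hv10, hv11]
  · linear_combination (A : M2) 0 0 * hdet
  · ring
  · ring
  · linear_combination (A : M2) 1 1 * hdet

lemma diagSU_apply_zero_zero (t : ℝ) : (diagSU t : M2) 0 0 = exp (t * I) := by
  simp [diagSU, diagU]

lemma diagSU_apply_zero_one (t : ℝ) : (diagSU t : M2) 0 1 = 0 := by
  simp [diagSU, diagU]

lemma apply_zero_one_eq_zero_of_commute_diagSU {r : ℝ} (hr : Real.sin r ≠ 0) {v : SU2}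
    (h : Commute v (diagSU r)) : (v : M2) 0 1 = 0 := by
  have h01 := congrFun (congrFun (congrArg Subtype.val h.eq) 0) 1
  simp [diagSU, diagU, Matrix.mul_apply] at h01
  have hne : exp (r * I) - exp (-(r * I)) ≠ 0 := by
    rw [← two_sinh, sinh_mul_I, ← ofReal_sin]
    exact mul_ne_zero two_ne_zero (mul_ne_zero (ofReal_ne_zero.2 hr) I_ne_zero)
  have hprod : (exp (r * I) - exp (-(r * I))) * (v : M2) 0 1 = 0 := by
    linear_combination -h01
  exact (mul_eq_zero.1 hprod).resolve_left hne

def sqrtDiag (z : Circle) : SU2 := diagSU ((z : ℂ).arg / 2)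

lemma sqrtDiag_apply_zero_zero_sq (z : Circle) : (sqrtDiag z : M2) 0 0 ^ 2 = z := by
  conv_rhs => rw [← Circle.exp_arg z, Circle.coe_exp]
  rw [sqrtDiag, diagSU_apply_zero_zero, ← exp_nat_mul]
  push_cast
  ring_nf

lemma coe_conj_sqrtDiag (z : Circle) (A : SU2) :
    ((sqrtDiag z * A * (sqrtDiag z)⁻¹ : SU2) : M2) =
      !![(A : M2) 0 0, z * (A : M2) 0 1; conj (z : ℂ) * (A : M2) 1 0, (A : M2) 1 1] := by
  rw [su2_coe_conj_of_apply_zero_one_eq_zero (v := sqrtDiag z) (diagSU_apply_zero_one _),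
    sqrtDiag_apply_zero_zero_sq]

lemma exists_conj_eq_conj_sqrtDiag {v : SU2} (hv : (v : M2) 0 1 = 0) :
    ∃ z : Circle, ∀ A : SU2, v * A * v⁻¹ = sqrtDiag z * A * (sqrtDiag z)⁻¹ := by
  have hnorm : ‖(v : M2) 0 0‖ ^ 2 = 1 := by
    have h := su2_apply_zero_zero_mul_conj_add v
    rw [hv, map_zero, mul_zero, add_zero, mul_conj'] at h
    exact_mod_cast h
  let z : Circle := ⟨(v : M2) 0 0 ^ 2, mem_sphere_zero_iff_norm.2 (by rw [norm_pow, hnorm])⟩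
  refine ⟨z, fun A => Subtype.ext ?_⟩
  rw [coe_conj_sqrtDiag z, su2_coe_conj_of_apply_zero_one_eq_zero hv]

lemma trace_mul_conj_sqrtDiag (A B : SU2) (z : Circle) :
    ((A * (sqrtDiag z * B * (sqrtDiag z)⁻¹) : SU2) : M2).trace =
      ((2 * ((A : M2) 0 0 * (B : M2) 0 0).re + 2 * ((A : M2) 1 0 * (B : M2) 0 1 * z).re : ℝ) :
        ℂ) := by
  rw [Submonoid.coe_mul, coe_conj_sqrtDiag, Matrix.trace_fin_two]
  apply Complex.ext <;> simp [Matrix.mul_apply, su2_apply_one_one, su2_apply_one_zero] <;> ring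

lemma eq_of_re_mul_eq_of_re_mul_eq {w c z z' : ℂ} (hw : w.im ≠ 0) (hc : c ≠ 0)
    (h1 : (c * z).re = (c * z').re) (h2 : (w * c * z).re = (w * c * z').re) : z = z' := by
  have hre : (c * (z - z')).re = 0 := by rw [mul_sub, sub_re, h1, sub_self]
  have hwre : (w * (c * (z - z'))).re = 0 := by
    rw [mul_sub, mul_sub, ← mul_assoc, ← mul_assoc, sub_re, h2, sub_self]
  have him : (c * (z - z')).im = 0 := by
    rw [mul_re, hre, mul_zero, zero_sub, neg_eq_zero] at hwre
    exact (mul_eq_zero.1 hwre).resolve_left hw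
  exact sub_eq_zero.1 ((mul_eq_zero.1 (Complex.ext hre him)).resolve_left hc)

section Amalg

variable {A G H K : Type*} [Group A] [Group G] [Group H] [Group K] {φ : A →* G} {ψ : A →* H}

def Amalg.lift (f : G →* K) (h : H →* K) (hfh : ∀ a, f (φ a) = h (ψ a)) : Amalg φ ψ →* K :=
  QuotientGroup.lift _ (Monoid.Coprod.lift f h) <| Subgroup.normalClosure_le_normal <| by
    rintro _ ⟨a, rfl⟩
    simp [hfh a]

@[simp]
lemma Amalg.lift_inl (f : G →* K) (h : H →* K) (hfh : ∀ a, f (φ a) = h (ψ a)) (g : G) :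
    Amalg.lift f h hfh (Amalg.inl φ ψ g) = f g :=
  rfl

@[simp]
lemma Amalg.lift_inr (f : G →* K) (h : H →* K) (hfh : ∀ a, f (φ a) = h (ψ a)) (g : H) :
    Amalg.lift f h hfh (Amalg.inr φ ψ g) = h g :=
  rfl

@[ext]
lemma Amalg.hom_ext {f g : Amalg φ ψ →* K}
    (h1 : f.comp (Amalg.inl φ ψ) = g.comp (Amalg.inl φ ψ))
    (h2 : f.comp (Amalg.inr φ ψ) = g.comp (Amalg.inr φ ψ)) : f = g :=
  QuotientGroup.monoidHom_ext _ (Monoid.Coprod.hom_ext h1 h2)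

lemma Amalg.continuous_lift_apply {Z : Type*} [TopologicalSpace Z] [TopologicalSpace K]
    [ContinuousMul K] (f : Z → G →* K) (h : Z → H →* K) (hfh : ∀ z a, f z (φ a) = h z (ψ a))
    (hf : ∀ g, Continuous fun z => f z g) (hh : ∀ g, Continuous fun z => h z g)
    (x : Amalg φ ψ) : Continuous fun z => Amalg.lift (f z) (h z) (hfh z) x := by
  obtain ⟨y, rfl⟩ := QuotientGroup.mk'_surjective _ x
  induction y using Monoid.Coprod.induction_on with
  | inl g => exact (hf g).congr fun z => (Amalg.lift_inl _ _ _ g).symm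
  | inr g => exact (hh g).congr fun z => (Amalg.lift_inr _ _ _ g).symm
  | mul p q hp hq => exact (hp.mul hq).congr fun z => by simp only [map_mul, Pi.mul_apply]

end Amalg

def trFn {G : Type*} [Group G] (x : G) : CharVar G → ℂ :=
  Quotient.lift (fun ρ : G →* SU2 => ((ρ x : SU2) : M2).trace) <| by
    rintro ρ σ ⟨u, hu⟩
    rw [hu x]
    change _ = ((u : M2) * (ρ x : M2) * star (u : M2)).trace
    rw [Matrix.trace_mul_cycle, su2_star_mul_self, one_mul]

lemma continuous_trFn {G : Type*} [Group G] (x : G) : Continuous (trFn x) :=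
  continuous_quot_lift _ <| (continuous_subtype_val.comp <|
    (continuous_apply x).comp continuous_induced_dom).matrix_trace

section Gluing

variable {G : Type*} [Group G] {μ : G}

lemma Amalg.inl_zpowersHom_self :
    Amalg.inl (zpowersHom G μ) (zpowersHom G μ) μ =
      Amalg.inr (zpowersHom G μ) (zpowersHom G μ) μ := by
  simpa using amalg_comm (zpowersHom G μ) (zpowersHom G μ) (Multiplicative.ofAdd 1)

variable {ρ1 ρ2 : G →* SU2} {r : ℝ}

variable (μ ρ1 ρ2) in
def gluingSet : Set (CharVar (Amalg (zpowersHom G μ) (zpowersHom G μ))) :=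
  {c | ∃ ρ : Amalg (zpowersHom G μ) (zpowersHom G μ) →* SU2, c = charCl ρ ∧
    (∃ u : SU2, ∀ g, ρ (Amalg.inl _ _ g) = u * ρ1 g * u⁻¹) ∧
    (∃ u : SU2, ∀ g, ρ (Amalg.inr _ _ g) = u * ρ2 g * u⁻¹)}

def glueRep (hm1 : ρ1 μ = diagSU r) (hm2 : ρ2 μ = diagSU r) (z : Circle) :
    Amalg (zpowersHom G μ) (zpowersHom G μ) →* SU2 :=
  Amalg.lift ρ1 ((MulAut.conj (sqrtDiag z)).toMonoidHom.comp ρ2) fun a => by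
    simp only [zpowersHom_apply, MonoidHom.comp_apply, map_zpow, hm1, hm2]
    simp [sqrtDiag, (diagSU_comm _ r).eq]

variable (hm1 : ρ1 μ = diagSU r) (hm2 : ρ2 μ = diagSU r)

@[simp]
lemma glueRep_inl (z : Circle) (g : G) : glueRep hm1 hm2 z (Amalg.inl _ _ g) = ρ1 g :=
  Amalg.lift_inl _ _ _ g

@[simp]
lemma glueRep_inr (z : Circle) (g : G) :
    glueRep hm1 hm2 z (Amalg.inr _ _ g) = sqrtDiag z * ρ2 g * (sqrtDiag z)⁻¹ :=
  Amalg.lift_inr _ _ _ g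

lemma continuous_glueRep : Continuous (glueRep hm1 hm2) := by
  refine continuous_induced_rng.2 <| continuous_pi <|
    Amalg.continuous_lift_apply _ _ _ (fun _ => continuous_const) fun g => ?_
  refine continuous_induced_rng.2 ?_
  simp only [Function.comp_def, MonoidHom.comp_apply, MulEquiv.coe_toMonoidHom, MulAut.conj_apply,
    coe_conj_sqrtDiag]
  refine continuous_matrix fun i j => ?_
  fin_cases i <;> fin_cases j <;> simp <;> fun_prop

lemma exists_eq_glueRep {ρ : Amalg (zpowersHom G μ) (zpowersHom G μ) →* SU2} {w : SU2}
    (hr : Real.sin r ≠ 0) (hinl : ∀ g, ρ (Amalg.inl _ _ g) = ρ1 g)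
    (hinr : ∀ g, ρ (Amalg.inr _ _ g) = w * ρ2 g * w⁻¹) :
    ∃ z : Circle, ρ = glueRep hm1 hm2 z := by
  have hw : Commute w (diagSU r) := by
    have h := hinr μ
    rw [← Amalg.inl_zpowersHom_self, hinl, hm1, hm2, eq_mul_inv_iff_mul_eq] at h
    exact h.symm
  obtain ⟨z, hz⟩ := exists_conj_eq_conj_sqrtDiag (apply_zero_one_eq_zero_of_commute_diagSU hr hw)
  refine ⟨z, Amalg.hom_ext ?_ ?_⟩ <;> ext g
  · simp [hinl]
  · simp [hinr, hz]

lemma gluingSet_eq_range (hr : Real.sin r ≠ 0) :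
    gluingSet μ ρ1 ρ2 = Set.range fun z => charCl (glueRep hm1 hm2 z) := by
  ext c
  constructor
  · rintro ⟨ρ, rfl, ⟨u, hu⟩, ⟨v, hv⟩⟩
    obtain ⟨z, hz⟩ := exists_eq_glueRep hm1 hm2 (ρ := (MulAut.conj u⁻¹).toMonoidHom.comp ρ)
      (w := u⁻¹ * v) hr (fun g => by simp [hu]; group) (fun g => by simp [hv]; group)
    refine ⟨z, ?_⟩
    dsimp only
    rw [← hz]
    exact Quotient.sound ⟨u, fun g => by simp; group⟩
  · rintro ⟨z, rfl⟩
    exact ⟨_, rfl, ⟨1, by simp⟩, ⟨sqrtDiag z, glueRep_inr hm1 hm2 z⟩⟩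

lemma trace_glueRep_inl_mul_inr (z : Circle) (a b : G) :
    ((glueRep hm1 hm2 z (Amalg.inl _ _ a * Amalg.inr _ _ b) : SU2) : M2).trace =
      ((2 * ((ρ1 a : M2) 0 0 * (ρ2 b : M2) 0 0).re
        + 2 * ((ρ1 a : M2) 1 0 * (ρ2 b : M2) 0 1 * z).re : ℝ) : ℂ) := by
  rw [map_mul, glueRep_inl, glueRep_inr, trace_mul_conj_sqrtDiag]

lemma injective_trace_glueRep (hr : Real.sin r ≠ 0) {a b : G} (ha : (ρ1 a : M2) 0 1 ≠ 0)
    (hb : (ρ2 b : M2) 0 1 ≠ 0) :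
    Function.Injective fun z =>
      (((glueRep hm1 hm2 z (Amalg.inl _ _ a * Amalg.inr _ _ b) : SU2) : M2).trace,
        ((glueRep hm1 hm2 z (Amalg.inl _ _ a * Amalg.inr _ _ (μ * b)) : SU2) : M2).trace) := by
  intro z z' h
  simp only [Prod.mk.injEq, trace_glueRep_inl_mul_inr, ofReal_inj] at h
  obtain ⟨h1, h2⟩ := h
  have hμb : (ρ2 (μ * b) : M2) 0 1 = exp (r * I) * (ρ2 b : M2) 0 1 := by
    simp [hm2, diagSU, diagU, Matrix.mul_apply]
  rw [hμb, mul_left_comm ((ρ1 a : M2) 1 0)] at h2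
  have hc : (ρ1 a : M2) 1 0 * (ρ2 b : M2) 0 1 ≠ 0 :=
    mul_ne_zero (mt (su2_apply_one_zero_eq_zero_iff _).1 ha) hb
  refine Subtype.ext <| eq_of_re_mul_eq_of_re_mul_eq (w := exp (r * I)) ?_ hc ?_ ?_
  · rwa [exp_ofReal_mul_I_im]
  · linarith
  · linarith

end Gluing

end CS

open CS in
/-- Given irreducible representations `ρ₁, ρ₂` of `G_{-2,7}` agreeing on the
meridian with `diag(e^{ir}, e^{-ir})`, `r ∈ (0,π)`, the set of classes in `χ(π₁(Z))` restricting
(up to conjugation) to `ρ₁` and `ρ₂` on the two copies is homeomorphic to a circle. -/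
theorem gluing_parameter_circle (r : ℝ) (hr : r ∈ Set.Ioo 0 Real.pi)
    (ρ1 ρ2 : TK (-2) 7 →* SU2) (h1 : IsIrrep ρ1) (h2 : IsIrrep ρ2)
    (hm1 : ((ρ1 muN27 : SU2) : Matrix (Fin 2) (Fin 2) ℂ) = diagU r)
    (hm2 : ((ρ2 muN27 : SU2) : Matrix (Fin 2) (Fin 2) ℂ) = diagU r) :
    Nonempty
      (↥{c : CharVar Pi1Z | ∃ ρ : Pi1Z →* SU2, c = charCl ρ ∧
          (∃ u : SU2, ∀ g : TK (-2) 7,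
            ρ (Amalg.inl (zpowersHom (TK (-2) 7) muN27) (zpowersHom (TK (-2) 7) muN27) g)
              = u * ρ1 g * u⁻¹) ∧
          (∃ u : SU2, ∀ g : TK (-2) 7,
            ρ (Amalg.inr (zpowersHom (TK (-2) 7) muN27) (zpowersHom (TK (-2) 7) muN27) g)
              = u * ρ2 g * u⁻¹)} ≃ₜ Circle) := by
  have hsin : Real.sin r ≠ 0 := (Real.sin_pos_of_pos_of_lt_pi hr.1 hr.2).ne'
  have hm1' : ρ1 muN27 = diagSU r := Subtype.ext hm1
  have hm2' : ρ2 muN27 = diagSU r := Subtype.ext hm2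
  obtain ⟨a, ha⟩ := h1.exists_apply_zero_one_ne_zero
  obtain ⟨b, hb⟩ := h2.exists_apply_zero_one_ne_zero
  let τ : CharVar Pi1Z → ℂ × ℂ := fun c =>
    (trFn (Amalg.inl _ _ a * Amalg.inr _ _ b) c,
      trFn (Amalg.inl _ _ a * Amalg.inr _ _ (muN27 * b)) c)
  have hτ : Continuous τ := (continuous_trFn _).prodMk (continuous_trFn _)
  have hglue : Continuous fun z => charCl (glueRep hm1' hm2' z) :=
    continuous_quot_mk.comp (continuous_glueRep hm1' hm2')
  have hemb : Topology.IsEmbedding fun z => charCl (glueRep hm1' hm2' z) :=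
    .of_comp hglue hτ ((hτ.comp hglue).isClosedEmbedding
      (injective_trace_glueRep hm1' hm2' hsin ha hb)).isEmbedding
  exact ⟨(Homeomorph.setCongr (gluingSet_eq_range hm1' hm2' hsin)).trans hemb.toHomeomorph.symm⟩
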